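/- Assume either (i) a_{−1}(1) > a_1(1) and y_{−1,0} + y_{−1,1} > y_{1,0} + y_{1,1}, or (ii) a_{−1}(1) ≥ a_1(1) > 0 and y_{−1,0} + y_{−1,1} ≥ y_{1,0} + y_{1,1} > 0. Let G be a semi-infinite matrix with G_{ij} ≥ 0 and ∑_{j≥1} G_{ij} ≤ 1 for every i ≥ 1, satisfying the equation G = A_1 G² + A_0 G + A_{−1} entrywise (all series absolutely convergent), and such that (G_k)_{ij} ≤ G_{ij} for all i, j and all k ≥ 0. Then lim_{k→∞} ‖G − G_k‖_∞ = 0, where ‖A‖_∞ := sup_{i≥1} ∑_{j≥1} |A_{ij}|. -/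

import Mathlib

/-!
If every row of `G_k` sums to at least `σ ∈ [0, 1]`, then every row of `G_k²` sums to at least `σ²`,
so row `r ≥ 2` of `G_{k+1}` sums to at least `g σ := a_{-1}(1) + a_0(1) σ + a_1(1) σ²`, and row `1`
to at least the analogous quadratic `ḡ σ` in the boundary masses `y_{i,0} + y_{i,1}`. The row sums
of `G_k` therefore dominate `σ_k`, where `σ_0 = 0` and `σ_{k+1} = min (g σ_k) (ḡ σ_k)`. Both
quadratics fix `1`, and `g s - s = (1 - s) (a_{-1}(1) - a_1(1) s)` is positive on `[0, 1)` under the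
drift condition (likewise for `ḡ`), so `σ_k` increases to `1`. Since `G ≥ G_k` and the rows of `G`
sum to at most `1`, `‖G - G_k‖_∞ ≤ 1 - σ_k → 0`.
-/

open Filter Topology

/- Convention: the transition probabilities a_{i,j} (i,j ∈ {−1,0,1}) are encoded
as `v : Fin 3 → Fin 3 → ℝ` and the boundary probabilities y_{i,j}
(i ∈ {−1,0,1}, j ∈ {0,1}) as `y : Fin 3 → Fin 2 → ℝ`, where the first index
`0, 1, 2` corresponds to `−1, 0, 1`. Rows and columns of semi-infinite matrices
are indexed by ℕ, with index `r : ℕ` representing the row `r+1 ≥ 1`. -/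

noncomputable def normInf (A : ℕ → ℕ → ℝ) : ℝ := ⨆ i, ∑' j, |A i j|

noncomputable def matMul (A B : ℕ → ℕ → ℝ) : ℕ → ℕ → ℝ :=
  fun i j => ∑' k, A i k * B k j

/-- The block coefficient A_i: (A_i)_{1,1} = y_{i,0}, (A_i)_{1,2} = y_{i,1}, and
for rows r ≥ 2 the subdiagonal, diagonal and superdiagonal entries are
a_{i,−1}, a_{i,0}, a_{i,1}; all other entries vanish. -/
noncomputable def qbdA (v : Fin 3 → Fin 3 → ℝ) (y : Fin 3 → Fin 2 → ℝ)
    (i : Fin 3) : ℕ → ℕ → ℝ := fun r c =>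
  if r = 0 then (if c = 0 then y i 0 else if c = 1 then y i 1 else 0)
  else if c + 1 = r then v i 0 else if c = r then v i 1
  else if c = r + 1 then v i 2 else 0

noncomputable def gbdIter (Am1 A0 A1 : ℕ → ℕ → ℝ) : ℕ → ℕ → ℕ → ℝ
  | 0 => fun _ _ => 0
  | k + 1 => fun i j =>
      matMul A1 (matMul (gbdIter Am1 A0 A1 k) (gbdIter Am1 A0 A1 k)) i j +
        matMul A0 (gbdIter Am1 A0 A1 k) i j + Am1 i j

/-- `α m` is the mass of a level change by `m - 1`. -/
noncomputable def genFun (α : Fin 3 → ℝ) (s : ℝ) : ℝ := α 0 + α 1 * s + α 2 * s ^ 2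

section genFun

variable {α : Fin 3 → ℝ} {s : ℝ}

theorem genFun_mem_Icc (hα : ∀ m, 0 ≤ α m) (h1 : ∑ m, α m = 1) (hs : s ∈ Set.Icc (0 : ℝ) 1) :
    genFun α s ∈ Set.Icc (0 : ℝ) 1 := by
  rw [Fin.sum_univ_three] at h1
  obtain ⟨hs0, hs1⟩ := hs
  have := hα 0; have := hα 1; have := hα 2
  constructor <;> simp only [genFun] <;> nlinarith [mul_nonneg hs0 (sub_nonneg.2 hs1)]

theorem genFun_one (h1 : ∑ m, α m = 1) : genFun α 1 = 1 := by
  rw [Fin.sum_univ_three] at h1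
  simp only [genFun]
  linarith

theorem lt_genFun (h1 : ∑ m, α m = 1) (hdrift : α 2 ≤ α 0) (hpos : 0 < α 0)
    (hs : s ∈ Set.Ico (0 : ℝ) 1) : s < genFun α s := by
  rw [Fin.sum_univ_three] at h1
  obtain ⟨hs0, hs1⟩ := hs
  have hfactor : genFun α s - s = (1 - s) * (α 0 - α 2 * s) := by
    simp only [genFun]; linear_combination s * h1
  have hgap : 0 < α 0 - α 2 * s := by
    rcases le_or_gt 0 (α 2) with h | h <;> nlinarith
  nlinarith [mul_pos (sub_pos.2 hs1) hgap]

end genFun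

theorem tendsto_iterate_of_lt_self {φ : ℝ → ℝ} (hφc : Continuous φ)
    (hφ : Set.MapsTo φ (Set.Icc 0 1) (Set.Icc 0 1))
    (hlt : ∀ s ∈ Set.Ico (0 : ℝ) 1, s < φ s) (hφ1 : φ 1 = 1) {x : ℝ}
    (hx : x ∈ Set.Icc (0 : ℝ) 1) :
    Tendsto (fun n => φ^[n] x) atTop (𝓝 1) := by
  set u := fun n => φ^[n] x
  have hu : ∀ n, u n ∈ Set.Icc (0 : ℝ) 1 := fun n => hφ.iterate n hx
  have hmono : Monotone u := monotone_nat_of_le_succ fun n => by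
    rw [show u (n + 1) = φ (u n) from Function.iterate_succ_apply' φ n x]
    rcases (hu n).2.lt_or_eq with h | h
    · exact (hlt _ ⟨(hu n).1, h⟩).le
    · rw [h, hφ1]
  have hlim := tendsto_atTop_ciSup hmono ⟨1, by rintro _ ⟨n, rfl⟩; exact (hu n).2⟩
  set L := ⨆ n, u n
  have hL : L ∈ Set.Icc (0 : ℝ) 1 := isClosed_Icc.mem_of_tendsto hlim (Eventually.of_forall hu)
  have hfix : φ L = L := by
    refine tendsto_nhds_unique ((hφc.tendsto L).comp hlim) ?_
    refine (hlim.comp (tendsto_add_atTop_nat 1)).congr fun n => ?_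
    simp only [u, Function.comp_apply, Function.iterate_succ_apply']
  rcases hL.2.lt_or_eq with h | h
  · exact absurd hfix (hlt L ⟨hL.1, h⟩).ne'
  · rwa [← h]

theorem mapsTo_min_genFun {α β : Fin 3 → ℝ} (hα : ∀ m, 0 ≤ α m) (hβ : ∀ m, 0 ≤ β m)
    (hα1 : ∑ m, α m = 1) (hβ1 : ∑ m, β m = 1) :
    Set.MapsTo (fun s => min (genFun α s) (genFun β s)) (Set.Icc 0 1) (Set.Icc 0 1) :=
  fun _ hs => ⟨le_min (genFun_mem_Icc hα hα1 hs).1 (genFun_mem_Icc hβ hβ1 hs).1,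
    min_le_of_left_le (genFun_mem_Icc hα hα1 hs).2⟩

theorem tendsto_iterate_min_genFun {α β : Fin 3 → ℝ} (hα : ∀ m, 0 ≤ α m) (hβ : ∀ m, 0 ≤ β m)
    (hα1 : ∑ m, α m = 1) (hβ1 : ∑ m, β m = 1) (hαd : α 2 ≤ α 0 ∧ 0 < α 0)
    (hβd : β 2 ≤ β 0 ∧ 0 < β 0) :
    Tendsto (fun n => (fun s => min (genFun α s) (genFun β s))^[n] 0) atTop (𝓝 1) := by
  refine tendsto_iterate_of_lt_self (by unfold genFun; fun_prop)
    (mapsTo_min_genFun hα hβ hα1 hβ1) (fun s hs => ?_) ?_ ⟨le_rfl, zero_le_one⟩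
  · exact lt_min (lt_genFun hα1 hαd.1 hαd.2 hs) (lt_genFun hβ1 hβd.1 hβd.2 hs)
  · simp only [genFun_one hα1, genFun_one hβ1, min_self]

theorem mul_tsum_le_tsum_mul {a b : ℕ → ℝ} {s : ℝ} (ha0 : ∀ k, 0 ≤ a k) (ha : Summable a)
    (hab : Summable fun k => a k * b k) (hs : ∀ k, s ≤ b k) :
    s * ∑' k, a k ≤ ∑' k, a k * b k := by
  rw [← tsum_mul_left]
  exact (ha.mul_left s).tsum_le_tsum (fun k => by nlinarith [ha0 k, hs k]) hab

theorem matMul_nonneg {A B : ℕ → ℕ → ℝ} (hA : ∀ i j, 0 ≤ A i j) (hB : ∀ i j, 0 ≤ B i j)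
    (i j : ℕ) : 0 ≤ matMul A B i j :=
  tsum_nonneg fun k => mul_nonneg (hA i k) (hB k j)

structure IsSubstochastic (B : ℕ → ℕ → ℝ) : Prop where
  nonneg : ∀ i j, 0 ≤ B i j
  summable : ∀ i, Summable (B i)
  tsum_le_one : ∀ i, ∑' j, B i j ≤ 1

namespace IsSubstochastic

variable {A B G : ℕ → ℕ → ℝ}

theorem of_le (hG : IsSubstochastic G) (h0 : ∀ i j, 0 ≤ B i j) (hle : ∀ i j, B i j ≤ G i j) :
    IsSubstochastic B where
  nonneg := h0
  summable i := (hG.summable i).of_nonneg_of_le (h0 i) (hle i)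
  tsum_le_one i := ((hG.summable i).of_nonneg_of_le (h0 i) (hle i)).tsum_le_tsum (hle i)
    (hG.summable i) |>.trans (hG.tsum_le_one i)

theorem summable_mul_tsum (hB : IsSubstochastic B) {a : ℕ → ℝ} (ha0 : ∀ k, 0 ≤ a k)
    (ha : Summable a) : Summable fun k => a k * ∑' j, B k j :=
  ha.of_nonneg_of_le (fun k => mul_nonneg (ha0 k) (tsum_nonneg (hB.nonneg k)))
    fun k => mul_le_of_le_one_right (ha0 k) (hB.tsum_le_one k)

theorem hasSum_matMul (hB : IsSubstochastic B) {i : ℕ} (hA0 : ∀ k, 0 ≤ A i k)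
    (hA : Summable (A i)) :
    HasSum (fun j => matMul A B i j) (∑' k, A i k * ∑' j, B k j) := by
  let F : ℕ × ℕ → ℝ := fun p => A i p.1 * B p.1 p.2
  have hF : Summable F := by
    refine (summable_prod_of_nonneg (f := F) fun p => mul_nonneg (hA0 p.1) (hB.nonneg p.1 p.2)).2
      ⟨fun k => (hB.summable k).mul_left (A i k), ?_⟩
    simp only [F, tsum_mul_left]
    exact hB.summable_mul_tsum hA0 hA
  have hrows : HasSum (fun k => A i k * ∑' j, B k j) (∑' p, F p) :=
    hF.hasSum.prod_fiberwise fun k => ((hB.summable k).hasSum.mul_left (A i k))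
  have hcols : HasSum (fun j => matMul A B i j) (∑' p, F p) :=
    ((Equiv.prodComm ℕ ℕ).hasSum_iff.2 hF.hasSum).prod_fiberwise
      fun j => (hF.prod_symm.prod_factor j).hasSum
  rwa [← hrows.tsum_eq] at hcols

theorem matMul (hA : IsSubstochastic A) (hB : IsSubstochastic B) :
    IsSubstochastic (matMul A B) where
  nonneg := matMul_nonneg hA.nonneg hB.nonneg
  summable i := (hB.hasSum_matMul (hA.nonneg i) (hA.summable i)).summable
  tsum_le_one i := by
    rw [(hB.hasSum_matMul (hA.nonneg i) (hA.summable i)).tsum_eq]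
    refine ((hB.summable_mul_tsum (hA.nonneg i) (hA.summable i)).tsum_le_tsum
      (fun k => mul_le_of_le_one_right (hA.nonneg i k) (hB.tsum_le_one k)) (hA.summable i)).trans
      (hA.tsum_le_one i)

theorem mul_le_tsum_matMul (hA : IsSubstochastic A) (hB : IsSubstochastic B) {s : ℝ}
    (hs : ∀ k, s ≤ ∑' j, B k j) (i : ℕ) : s * ∑' k, A i k ≤ ∑' j, _root_.matMul A B i j := by
  rw [(hB.hasSum_matMul (hA.nonneg i) (hA.summable i)).tsum_eq]
  exact mul_tsum_le_tsum_mul (hA.nonneg i) (hA.summable i)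
    (hB.summable_mul_tsum (hA.nonneg i) (hA.summable i)) hs

end IsSubstochastic

theorem normInf_nonneg (A : ℕ → ℕ → ℝ) : 0 ≤ normInf A :=
  Real.iSup_nonneg fun _ => tsum_nonneg fun _ => abs_nonneg _

theorem IsSubstochastic.normInf_sub_le {G B : ℕ → ℕ → ℝ} (hG : IsSubstochastic G)
    (hB0 : ∀ i j, 0 ≤ B i j) (hle : ∀ i j, B i j ≤ G i j) {s : ℝ}
    (hs : ∀ i, s ≤ ∑' j, B i j) : normInf (fun i j => G i j - B i j) ≤ 1 - s :=
  ciSup_le fun i => by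
    rw [tsum_congr fun j => abs_of_nonneg (sub_nonneg.2 (hle i j)),
      (hG.summable i).tsum_sub ((hG.of_le hB0 hle).summable i)]
    linarith [hG.tsum_le_one i, hs i]

theorem le_genFun_tsum_quadratic {Am1 A0 A1 B : ℕ → ℕ → ℝ} (hAm1 : IsSubstochastic Am1)
    (hA0 : IsSubstochastic A0) (hA1 : IsSubstochastic A1) (hB : IsSubstochastic B) {s : ℝ}
    (hs0 : 0 ≤ s) (hs : ∀ k, s ≤ ∑' j, B k j) (i : ℕ) :
    genFun ![∑' j, Am1 i j, ∑' j, A0 i j, ∑' j, A1 i j] s ≤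
      ∑' j, (matMul A1 (matMul B B) i j + matMul A0 B i j + Am1 i j) := by
  have hBB := hB.matMul hB
  have hsq : ∀ k, s ^ 2 ≤ ∑' j, matMul B B k j := fun k =>
    calc s ^ 2 = s * s := sq s
      _ ≤ s * ∑' l, B k l := mul_le_mul_of_nonneg_left (hs k) hs0
      _ ≤ _ := hB.mul_le_tsum_matMul hB hs k
  rw [((hA1.matMul hBB).summable i |>.add ((hA0.matMul hB).summable i)).tsum_add
    (hAm1.summable i), ((hA1.matMul hBB).summable i).tsum_add ((hA0.matMul hB).summable i)]
  have h1 := hA1.mul_le_tsum_matMul hBB hsq i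
  have h0 := hA0.mul_le_tsum_matMul hB hs i
  simp only [genFun, Matrix.cons_val]
  linarith

theorem gbdIter_nonneg {Am1 A0 A1 : ℕ → ℕ → ℝ} (hAm1 : ∀ i j, 0 ≤ Am1 i j)
    (hA0 : ∀ i j, 0 ≤ A0 i j) (hA1 : ∀ i j, 0 ≤ A1 i j) (n : ℕ) :
    ∀ i j, 0 ≤ gbdIter Am1 A0 A1 n i j := by
  induction n with
  | zero => exact fun _ _ => le_rfl
  | succ n ih =>
    intro i j
    have := matMul_nonneg hA1 (matMul_nonneg ih ih) i j
    have := matMul_nonneg hA0 ih i j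
    have := hAm1 i j
    simp only [gbdIter]
    linarith

theorem iterate_le_tsum_gbdIter {Am1 A0 A1 : ℕ → ℕ → ℝ} (hAm1 : IsSubstochastic Am1)
    (hA0 : IsSubstochastic A0) (hA1 : IsSubstochastic A1)
    (hsub : ∀ n, IsSubstochastic (gbdIter Am1 A0 A1 n)) {φ : ℝ → ℝ}
    (hφ : Set.MapsTo φ (Set.Icc 0 1) (Set.Icc 0 1))
    (hφle : ∀ s ∈ Set.Icc (0 : ℝ) 1, ∀ i,
      φ s ≤ genFun ![∑' j, Am1 i j, ∑' j, A0 i j, ∑' j, A1 i j] s) (n : ℕ) :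
    ∀ i, φ^[n] 0 ≤ ∑' j, gbdIter Am1 A0 A1 n i j := by
  induction n with
  | zero => simp [gbdIter]
  | succ n ih =>
    intro i
    have hσ : φ^[n] 0 ∈ Set.Icc (0 : ℝ) 1 := hφ.iterate n ⟨le_rfl, zero_le_one⟩
    rw [Function.iterate_succ_apply']
    exact (hφle _ hσ i).trans
      (le_genFun_tsum_quadratic hAm1 hA0 hA1 (hsub n) hσ.1 ih i)

section qbdA

variable {v : Fin 3 → Fin 3 → ℝ} {y : Fin 3 → Fin 2 → ℝ}

theorem qbdA_nonneg (hv : ∀ i j, 0 ≤ v i j) (hy : ∀ i j, 0 ≤ y i j) (m : Fin 3) (r c : ℕ) :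
    0 ≤ qbdA v y m r c := by
  unfold qbdA
  split_ifs <;> first | apply hv | apply hy | exact le_rfl

theorem hasSum_qbdA_zero (m : Fin 3) : HasSum (qbdA v y m 0) (y m 0 + y m 1) := by
  have h : ∀ c ∉ ({0, 1} : Finset ℕ), qbdA v y m 0 c = 0 := fun c hc => by
    simp only [Finset.mem_insert, Finset.mem_singleton, not_or] at hc
    simp [qbdA, hc.1, hc.2]
  rw [show y m 0 + y m 1 = ∑ c ∈ {0, 1}, qbdA v y m 0 c by simp [qbdA]]
  exact hasSum_sum_of_ne_finset_zero h

theorem hasSum_qbdA_succ (m : Fin 3) (t : ℕ) : HasSum (qbdA v y m (t + 1)) (∑ j, v m j) := by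
  have h : ∀ c ∉ ({t, t + 1, t + 2} : Finset ℕ), qbdA v y m (t + 1) c = 0 := fun c hc => by
    simp only [Finset.mem_insert, Finset.mem_singleton, not_or] at hc
    simp only [qbdA]
    split_ifs <;> first | omega | rfl | contradiction
  rw [show ∑ j, v m j = ∑ c ∈ {t, t + 1, t + 2}, qbdA v y m (t + 1) c by
    simp [qbdA, Fin.sum_univ_three, Finset.sum_insert, add_assoc]]
  exact hasSum_sum_of_ne_finset_zero h

theorem isSubstochastic_qbdA (hv : ∀ i j, 0 ≤ v i j) (hy : ∀ i j, 0 ≤ y i j)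
    (hvsum : ∑ i, ∑ j, v i j = 1) (hysum : ∑ i, (y i 0 + y i 1) = 1) (m : Fin 3) :
    IsSubstochastic (qbdA v y m) where
  nonneg := qbdA_nonneg hv hy m
  summable
    | 0 => (hasSum_qbdA_zero m).summable
    | t + 1 => (hasSum_qbdA_succ m t).summable
  tsum_le_one
    | 0 => by
      rw [(hasSum_qbdA_zero m).tsum_eq, ← hysum]
      exact Finset.single_le_sum (fun i _ => add_nonneg (hy i 0) (hy i 1)) (Finset.mem_univ m)
    | t + 1 => by
      rw [(hasSum_qbdA_succ m t).tsum_eq, ← hvsum]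
      exact Finset.single_le_sum (fun i _ => Finset.sum_nonneg fun j _ => hv i j)
        (Finset.mem_univ m)

theorem min_genFun_le_genFun_qbdA (s : ℝ) (i : ℕ) :
    min (genFun (fun m => ∑ j, v m j) s) (genFun (fun m => y m 0 + y m 1) s) ≤
      genFun ![∑' j, qbdA v y 0 i j, ∑' j, qbdA v y 1 i j, ∑' j, qbdA v y 2 i j] s := by
  rcases i with _ | t
  · refine (min_le_right _ _).trans_eq ?_
    simp [genFun, (hasSum_qbdA_zero _).tsum_eq]
  · refine (min_le_left _ _).trans_eq ?_
    simp [genFun, (hasSum_qbdA_succ _ _).tsum_eq]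

end qbdA

theorem stmt18 (v : Fin 3 → Fin 3 → ℝ) (y : Fin 3 → Fin 2 → ℝ)
    (hvnn : ∀ i j, 0 ≤ v i j) (hynn : ∀ i j, 0 ≤ y i j)
    (hvsum : ∑ i, ∑ j, v i j = 1) (hysum : ∑ i, (y i 0 + y i 1) = 1)
    (hdrift :
      ((v 2 0 + v 2 1 + v 2 2 < v 0 0 + v 0 1 + v 0 2) ∧
        (y 2 0 + y 2 1 < y 0 0 + y 0 1)) ∨
      ((v 2 0 + v 2 1 + v 2 2 ≤ v 0 0 + v 0 1 + v 0 2) ∧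
        (0 < v 2 0 + v 2 1 + v 2 2) ∧
        (y 2 0 + y 2 1 ≤ y 0 0 + y 0 1) ∧ (0 < y 2 0 + y 2 1)))
    (Am1 A0 A1 : ℕ → ℕ → ℝ)
    (hAm1 : Am1 = qbdA v y 0) (hA0 : A0 = qbdA v y 1) (hA1 : A1 = qbdA v y 2)
    (G : ℕ → ℕ → ℝ)
    (hGnn : ∀ i j, 0 ≤ G i j)
    (hGrow : ∀ i, Summable (fun j => G i j) ∧ (∑' j, G i j) ≤ 1)
    (hGdom : ∀ k i j, gbdIter Am1 A0 A1 k i j ≤ G i j) :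
    Tendsto (fun k => normInf (fun i j => G i j - gbdIter Am1 A0 A1 k i j))
      atTop (𝓝 0) := by
  subst hAm1 hA0 hA1
  have hA := isSubstochastic_qbdA hvnn hynn hvsum hysum
  have hG : IsSubstochastic G := ⟨hGnn, fun i => (hGrow i).1, fun i => (hGrow i).2⟩
  have hiter_nonneg := gbdIter_nonneg (hA 0).nonneg (hA 1).nonneg (hA 2).nonneg
  obtain ⟨hvdrift, hydrift⟩ : ((∑ j, v 2 j) ≤ ∑ j, v 0 j ∧ 0 < ∑ j, v 0 j) ∧
      (y 2 0 + y 2 1 ≤ y 0 0 + y 0 1 ∧ 0 < y 0 0 + y 0 1) := by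
    simp only [Fin.sum_univ_three]
    have := hvnn 2 0; have := hvnn 2 1; have := hvnn 2 2; have := hynn 2 0; have := hynn 2 1
    rcases hdrift with ⟨h1, h2⟩ | ⟨h1, h2, h3, h4⟩ <;> refine ⟨⟨?_, ?_⟩, ?_, ?_⟩ <;> linarith
  set φ := fun s => min (genFun (fun m => ∑ j, v m j) s) (genFun (fun m => y m 0 + y m 1) s)
  have ha : ∀ m, 0 ≤ ∑ j, v m j := fun m => Finset.sum_nonneg fun j _ => hvnn m j
  have hb : ∀ m, 0 ≤ y m 0 + y m 1 := fun m => add_nonneg (hynn m 0) (hynn m 1)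
  have hφ : Tendsto (fun n => φ^[n] 0) atTop (𝓝 1) :=
    tendsto_iterate_min_genFun ha hb hvsum hysum hvdrift hydrift
  have hlow : ∀ n i, φ^[n] 0 ≤ ∑' j, gbdIter (qbdA v y 0) (qbdA v y 1) (qbdA v y 2) n i j :=
    iterate_le_tsum_gbdIter (hA 0) (hA 1) (hA 2) (fun n => hG.of_le (hiter_nonneg n) (hGdom n))
      (mapsTo_min_genFun ha hb hvsum hysum) (fun s _ => min_genFun_le_genFun_qbdA s)
  refine squeeze_zero (fun n => normInf_nonneg _)
    (fun n => hG.normInf_sub_le (hiter_nonneg n) (hGdom n) (hlow n)) ?_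
  simpa using hφ.const_sub 1
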